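/- There exist constants c₁, c₂ > 0 such that for every n ≥ 2, the linear map p : Z_2^n → ℓ_2^n defined by p(a,b) = a satisfies c₁·log n ≤ sup{ ‖a‖₂ / ‖(a,b)‖_{Z_2^n} : (a,b) ≠ 0 } ≤ c₂·log n. -/

import Mathlib

open scoped BigOperators

/-- The Euclidean norm on `ℝⁿ`. -/
noncomputable def l2 {n : ℕ} (b : Fin n → ℝ) : ℝ := Real.sqrt (∑ j, b j ^ 2)

/-- The Kalton–Peck map `F(b)_j = b_j log(|b_j|/‖b‖₂)`, with `F(b)_j = 0` when `b_j = 0`. -/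
noncomputable def KPF {n : ℕ} (b : Fin n → ℝ) : Fin n → ℝ :=
  fun j => if b j = 0 then 0 else b j * Real.log (|b j| / l2 b)

/-- The Kalton–Peck quasi-norm `‖(a,b)‖ = ‖b‖₂ + ‖a - F(b)‖₂` on `ℝⁿ × ℝⁿ`. -/
noncomputable def znorm {n : ℕ} (x : (Fin n → ℝ) × (Fin n → ℝ)) : ℝ :=
  l2 x.2 + l2 (x.1 - KPF x.2)

/-- Operator "norm" `sup_{x ≠ 0} N_W(T x) / N_V(x)` of a map `T` between spaces
equipped with (quasi-)norms `N_V`, `N_W`. -/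
noncomputable def ratioSup {V W : Type*} [Zero V] (NV : V → ℝ) (NW : W → ℝ) (T : V → W) : ℝ :=
  ⨆ x : {x : V // x ≠ 0}, NW (T x.1) / NV x.1

/-!
For `t ≥ 0` and `s > 0`, `-t log t ≤ t log s + 1/s` (from `log x ≥ 1 - 1/x` at `x = s t`).
Applied to `t = |b_j|/‖b‖₂` with `s = √n`, this gives `|F(b)_j| ≤ |b_j| log √n + ‖b‖₂/√n`, hence
`‖F(b)‖₂ ≤ (log n / 2 + 1)‖b‖₂`, and `‖a‖₂ ≤ ‖a - F(b)‖₂ + ‖F(b)‖₂ ≤ 3 log n ‖(a,b)‖`.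
Conversely, for `b = (1,…,1)` and `a = F(b) = -(log n / 2) b` the quasi-norm is `‖b‖₂ = √n`
while `‖a‖₂ = √n log n / 2`.
-/

open Real

lemma neg_mul_log_le_mul_log_add_inv {t s : ℝ} (ht : 0 ≤ t) (hs : 0 < s) :
    -(t * log t) ≤ t * log s + s⁻¹ := by
  rcases ht.eq_or_lt with rfl | ht
  · simp [hs.le]
  have h := one_sub_inv_le_log_of_pos (mul_pos hs ht)
  rw [log_mul hs.ne' ht.ne', mul_inv] at h
  have hcancel : t * (s⁻¹ * t⁻¹) = s⁻¹ := by field_simp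
  have h' := mul_le_mul_of_nonneg_left h ht.le
  rw [mul_sub, mul_one, hcancel, mul_add] at h'
  linarith

section l2

variable {n : ℕ}

lemma l2_eq_norm (b : Fin n → ℝ) : l2 b = ‖WithLp.toLp 2 b‖ := by
  simp [l2, EuclideanSpace.norm_eq, Real.norm_eq_abs, sq_abs]

lemma l2_nonneg (b : Fin n → ℝ) : 0 ≤ l2 b := sqrt_nonneg _

lemma l2_add_le (u v : Fin n → ℝ) : l2 (u + v) ≤ l2 u + l2 v := by
  simpa only [l2_eq_norm, WithLp.toLp_add] using norm_add_le _ _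

lemma l2_le_sub_add (u v : Fin n → ℝ) : l2 u ≤ l2 (u - v) + l2 v := by
  simpa using l2_add_le (u - v) v

lemma l2_mul_abs (c : ℝ) (u : Fin n → ℝ) : l2 (fun j => c * |u j|) = |c| * l2 u := by
  simp only [l2, mul_pow, sq_abs, ← Finset.mul_sum, sqrt_mul' _ (Finset.sum_nonneg fun j _ =>
    sq_nonneg (u j)), sqrt_sq_eq_abs]

lemma l2_const (c : ℝ) : l2 (fun _ : Fin n => c) = √n * |c| := by
  simp [l2, sqrt_mul' _ (sq_nonneg c), sqrt_sq_eq_abs]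

lemma abs_le_l2 (b : Fin n → ℝ) (j : Fin n) : |b j| ≤ l2 b := by
  rw [← sqrt_sq_eq_abs]
  exact sqrt_le_sqrt (Finset.single_le_sum (fun i _ => sq_nonneg (b i)) (Finset.mem_univ j))

lemma l2_le_of_abs_le {u v : Fin n → ℝ} (h : ∀ j, |u j| ≤ v j) : l2 u ≤ l2 v :=
  sqrt_le_sqrt <| Finset.sum_le_sum fun j _ => sq_le_sq.mpr ((h j).trans (le_abs_self _))

end l2

section KPF

variable {n : ℕ}

lemma abs_KPF_le (b : Fin n → ℝ) (j : Fin n) {s : ℝ} (hs : 0 < s) :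
    |KPF b j| ≤ |b j| * log s + l2 b / s := by
  by_cases hb : b j = 0
  · simpa [KPF, hb] using div_nonneg (l2_nonneg b) hs.le
  have hL : 0 < l2 b := (abs_pos.mpr hb).trans_le (abs_le_l2 b j)
  set t := |b j| / l2 b
  have ht1 : t ≤ 1 := div_le_one_of_le₀ (abs_le_l2 b j) hL.le
  have hbj : |b j| = l2 b * t := (mul_div_cancel₀ _ hL.ne').symm
  calc |KPF b j| = l2 b * -(t * log t) := by
        rw [KPF, if_neg hb, abs_mul, abs_of_nonpos (log_nonpos (by positivity) ht1), hbj]; ring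
    _ ≤ l2 b * (t * log s + s⁻¹) :=
        mul_le_mul_of_nonneg_left (neg_mul_log_le_mul_log_add_inv (by positivity) hs) hL.le
    _ = |b j| * log s + l2 b / s := by rw [hbj]; ring

lemma l2_KPF_le (hn : n ≠ 0) (b : Fin n → ℝ) : l2 (KPF b) ≤ (log n / 2 + 1) * l2 b := by
  have hs : 0 < √(n : ℝ) := by positivity
  calc l2 (KPF b) ≤ l2 ((fun j => log √n * |b j|) + fun _ => l2 b / √n) :=
        l2_le_of_abs_le fun j => (abs_KPF_le b j hs).trans_eq (by simp [mul_comm])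
    _ ≤ l2 (fun j => log √n * |b j|) + l2 (fun _ : Fin n => l2 b / √n) := l2_add_le _ _
    _ = (log n / 2 + 1) * l2 b := by
        rw [l2_mul_abs, l2_const, log_sqrt n.cast_nonneg, abs_of_nonneg (by positivity),
          abs_of_nonneg (div_nonneg (l2_nonneg b) hs.le)]
        field_simp

lemma KPF_ones : KPF (fun _ : Fin n => (1 : ℝ)) = fun _ => -(log n / 2) := by
  funext j
  simp [KPF, l2_const, log_sqrt n.cast_nonneg]

end KPF

section znorm

variable {n : ℕ}

lemma znorm_nonneg (x : (Fin n → ℝ) × (Fin n → ℝ)) : 0 ≤ znorm x :=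
  add_nonneg (l2_nonneg _) (l2_nonneg _)

lemma znorm_KPF_self (b : Fin n → ℝ) : znorm (KPF b, b) = l2 b := by
  simp [znorm, l2]

lemma l2_fst_le_mul_znorm {K : ℝ} (hK : 1 ≤ K) (x : (Fin n → ℝ) × (Fin n → ℝ))
    (hF : l2 (KPF x.2) ≤ K * l2 x.2) : l2 x.1 ≤ K * znorm x :=
  calc l2 x.1 ≤ l2 (x.1 - KPF x.2) + l2 (KPF x.2) := l2_le_sub_add _ _
    _ ≤ K * l2 (x.1 - KPF x.2) + K * l2 x.2 :=
        add_le_add (le_mul_of_one_le_left (l2_nonneg _) hK) hF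
    _ = K * znorm x := by rw [znorm]; ring

end znorm

section ratioSup

variable {V W : Type*} [Zero V] {NV : V → ℝ} {NW : W → ℝ} {T : V → W} {C : ℝ}

lemma ratioSup_le (hC0 : 0 ≤ C) (hC : ∀ x ≠ 0, NW (T x) / NV x ≤ C) : ratioSup NV NW T ≤ C :=
  Real.iSup_le (fun x => hC x x.2) hC0

lemma le_ratioSup (hC : ∀ x ≠ 0, NW (T x) / NV x ≤ C) {x : V} (hx : x ≠ 0) :
    NW (T x) / NV x ≤ ratioSup NV NW T :=
  le_ciSup (f := fun x : {x : V // x ≠ 0} => NW (T x.1) / NV x.1)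
    ⟨C, by rintro _ ⟨y, rfl⟩; exact hC y y.2⟩ ⟨x, hx⟩

end ratioSup

lemma exists_l2_fst_div_znorm_eq {n : ℕ} (hn : n ≠ 0) :
    ∃ x : (Fin n → ℝ) × (Fin n → ℝ), x ≠ 0 ∧ l2 x.1 / znorm x = log n / 2 := by
  refine ⟨(KPF fun _ => 1, fun _ => 1), fun h => one_ne_zero <|
    congrFun (congrArg Prod.snd h) ⟨0, Nat.pos_of_ne_zero hn⟩, ?_⟩
  have hs : 0 < √(n : ℝ) := by positivity
  rw [znorm_KPF_self, KPF_ones, l2_const, l2_const, abs_neg,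
    abs_of_nonneg (by positivity [log_natCast_nonneg n]), abs_one, mul_one,
    mul_div_cancel_left₀ _ hs.ne']

/-- The operator norm of the projection `p : Z_2^n → ℓ_2^n`, `p(a,b) = a`, is of order `log n`. -/
theorem znorm_first_projection_opnorm :
    ∃ c₁ : ℝ, 0 < c₁ ∧ ∃ c₂ : ℝ, 0 < c₂ ∧ ∀ n : ℕ, 2 ≤ n →
      c₁ * Real.log n ≤ ratioSup znorm l2 (fun x : (Fin n → ℝ) × (Fin n → ℝ) => x.1) ∧
      ratioSup znorm l2 (fun x : (Fin n → ℝ) × (Fin n → ℝ) => x.1) ≤ c₂ * Real.log n := by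
  refine ⟨1 / 2, by norm_num, 3, by norm_num, fun n hn => ?_⟩
  have hn0 : n ≠ 0 := by omega
  have hlog : 1 / 2 ≤ log n := by
    have := log_le_log two_pos (show (2 : ℝ) ≤ n by exact_mod_cast hn)
    linarith [log_two_gt_d9]
  have hupper : ∀ x : (Fin n → ℝ) × (Fin n → ℝ), x ≠ 0 → l2 x.1 / znorm x ≤ 3 * log n :=
    fun x _ => div_le_of_le_mul₀ (znorm_nonneg x) (by positivity) <|
      l2_fst_le_mul_znorm (by linarith) x <| (l2_KPF_le hn0 x.2).trans <|
        mul_le_mul_of_nonneg_right (by linarith) (l2_nonneg _)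
  obtain ⟨x, hx, hratio⟩ := exists_l2_fst_div_znorm_eq hn0
  refine ⟨?_, ratioSup_le (by positivity) hupper⟩
  calc 1 / 2 * log n = l2 x.1 / znorm x := by rw [hratio]; ring
    _ ≤ _ := le_ratioSup hupper hx
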